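/- arXiv:2503.18615 — 6 statements merged into one kernel-verified Lean document; each statement's English description precedes it below -/
import Mathlib

section
/- Let κ be an infinite cardinal and X a set of infinite subsets of ω with |X| ≥ κ. The following are equivalent: (1) X is κ-fin-unbounded, i.e., for each d ∈ [ω]^ω there is S ⊆ X with |S| < κ such that for every finite F ⊆ X \ S the union ⋃F omits infinitely many intervals of d; (2) for each d ∈ [ω]^ω there is S ⊆ X with |S| < κ such that for every finite nonempty F ⊆ X \ S, d(n) ≤ (⋃F)(n) for infinitely many n; (3) for each d ∈ [ω]^ω there is S ⊆ X with |S| < κ such that for every finite nonempty F ⊆ X \ S, d(n) ≤ (min F)(n) for infinitely many n. -/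
open Set Filter

/-- The increasing enumeration of a set of naturals. -/
noncomputable def enum (s : Set ℕ) : ℕ → ℕ := Nat.nth (· ∈ s)

/-- `y` omits infinitely many intervals of `d`: `y ∩ [d(n), d(n+1)) = ∅` for infinitely
many `n`, where `d` is identified with its increasing enumeration. -/
def omitsInfinitelyManyIntervals (y d : Set ℕ) : Prop :=
  {n : ℕ | y ∩ Set.Ico (enum d n) (enum d (n + 1)) = ∅}.Infinite

attribute [local instance] Classical.propDecidable

lemma setOf_mem_infinite {s : Set ℕ} (hs : s.Infinite) : (setOf (· ∈ s)).Infinite := hs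

lemma enum_strictMono {s : Set ℕ} (hs : s.Infinite) : StrictMono (enum s) :=
  Nat.nth_strictMono hs

lemma enum_mem {s : Set ℕ} (hs : s.Infinite) (n : ℕ) : enum s n ∈ s :=
  Nat.nth_mem_of_infinite hs n

lemma enum_range (g : ℕ → ℕ) (hg : StrictMono g) (n : ℕ) : enum (Set.range g) n = g n := by
  classical
  have hmem : g n ∈ Set.range g := ⟨n, rfl⟩
  have hcount : Nat.count (· ∈ Set.range g) (g n) = n := by
    rw [Nat.count_eq_card_filter_range]
    have h : {x ∈ Finset.range (g n) | x ∈ Set.range g} = (Finset.range n).image g := by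
      ext k
      simp only [Finset.mem_filter, Finset.mem_range, Finset.mem_image, Set.mem_range]
      constructor
      · rintro ⟨hk, i, rfl⟩; exact ⟨i, hg.lt_iff_lt.mp hk, rfl⟩
      · rintro ⟨i, hi, rfl⟩; exact ⟨hg hi, i, rfl⟩
    rw [h, Finset.card_image_of_injective _ hg.injective, Finset.card_range]
  have h2 := Nat.nth_count (p := (· ∈ Set.range g)) hmem
  rw [hcount] at h2
  exact h2

lemma enum_mono_subset {a b : Set ℕ} (ha : a.Infinite) (hab : a ⊆ b) (n : ℕ) :
    enum b n ≤ enum a n := by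
  have hb : b.Infinite := ha.mono hab
  have h1 : Nat.count (· ∈ a) (enum a n + 1) = n + 1 := Nat.count_nth_succ_of_infinite (p := (· ∈ a)) ha n
  have hle : Nat.count (· ∈ a) (enum a n + 1) ≤ Nat.count (· ∈ b) (enum a n + 1) :=
    Nat.count_mono_left (fun k _ (hk : k ∈ a) => hab hk)
  have h2 : n < Nat.count (· ∈ b) (enum a n + 1) := by
    rw [h1] at hle; omega
  exact Nat.lt_succ_iff.mp ((Nat.lt_nth_iff_count_lt (p := (· ∈ b)) hb).mp h2)

lemma count_le_of_le_enum {x : Set ℕ} (hx : x.Infinite) {t n : ℕ} (h : t ≤ enum x n) :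
    Nat.count (· ∈ x) t ≤ n :=
  (Nat.count_le_iff_le_nth (p := (· ∈ x)) hx).mpr h

lemma le_enum_of_count_le {x : Set ℕ} (hx : x.Infinite) {t n : ℕ}
    (h : Nat.count (· ∈ x) t ≤ n) : t ≤ enum x n :=
  (Nat.count_le_iff_le_nth (p := (· ∈ x)) hx).mp h

lemma count_le_of_empty_Ico {y : Set ℕ} {a b : ℕ} (h : y ∩ Set.Ico a b = ∅) :
    Nat.count (· ∈ y) b ≤ Nat.count (· ∈ y) a := by
  classical
  rw [Nat.count_eq_card_filter_range, Nat.count_eq_card_filter_range]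
  apply Finset.card_le_card
  intro k hk
  simp only [Finset.mem_filter, Finset.mem_range] at hk ⊢
  refine ⟨?_, hk.2⟩
  by_contra hlt
  push_neg at hlt
  have : k ∈ y ∩ Set.Ico a b := ⟨hk.2, hlt, hk.1⟩
  rw [h] at this
  exact this

lemma count_sUnion_le (F : Finset (Set ℕ)) (t : ℕ) :
    Nat.count (· ∈ ⋃₀ (↑F : Set (Set ℕ))) t ≤ ∑ x ∈ F, Nat.count (· ∈ x) t := by
  classical
  rw [Nat.count_eq_card_filter_range]
  have hsub : {k ∈ Finset.range t | k ∈ ⋃₀ (↑F : Set (Set ℕ))}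
      ⊆ F.biUnion (fun x => {k ∈ Finset.range t | k ∈ x}) := by
    intro k hk
    simp only [Finset.mem_filter, Finset.mem_range, Set.mem_sUnion, Finset.mem_coe,
      Finset.mem_biUnion] at hk ⊢
    obtain ⟨hkt, x, hxF, hkx⟩ := hk
    exact ⟨x, hxF, hkt, hkx⟩
  calc _ ≤ (F.biUnion (fun x => {k ∈ Finset.range t | k ∈ x})).card :=
        Finset.card_le_card hsub
    _ ≤ ∑ x ∈ F, {k ∈ Finset.range t | k ∈ x}.card := Finset.card_biUnion_le
    _ = ∑ x ∈ F, Nat.count (· ∈ x) t := by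
        simp [Nat.count_eq_card_filter_range]

noncomputable def speedE (d : Set ℕ) : ℕ → ℕ
  | 0 => enum d 0
  | n + 1 => enum d (speedE d n + 1)

lemma speedE_succ (d : Set ℕ) (n : ℕ) : speedE d (n + 1) = enum d (speedE d n + 1) := rfl

lemma speedE_strictMono {d : Set ℕ} (hd : d.Infinite) : StrictMono (speedE d) := by
  apply strictMono_nat_of_lt_succ
  intro n
  calc speedE d n < speedE d n + 1 := Nat.lt_succ_self _
    _ ≤ enum d (speedE d n + 1) := (enum_strictMono hd).le_apply

lemma omits_to_le {d y : Set ℕ} (hd : d.Infinite) (hy : y.Infinite)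
    (h : omitsInfinitelyManyIntervals y (Set.range (speedE d))) :
    {n : ℕ | enum d n ≤ enum y n}.Infinite := by
  have he : StrictMono (speedE d) := speedE_strictMono hd
  unfold omitsInfinitelyManyIntervals at h
  simp only [enum_range _ he] at h
  apply Set.infinite_of_forall_exists_gt
  intro B
  obtain ⟨n, hnΩ, hnB⟩ := h.exists_gt (enum y B)
  simp only [Set.mem_setOf_eq] at hnΩ
  refine ⟨Nat.count (· ∈ y) (speedE d n), ?_, ?_⟩
  · set m := Nat.count (· ∈ y) (speedE d n) with hm
    have h1 : Nat.count (· ∈ y) (speedE d (n + 1)) ≤ m := count_le_of_empty_Ico hnΩ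
    have h2 : speedE d (n + 1) ≤ enum y m := le_enum_of_count_le hy h1
    have h3 : m ≤ speedE d n := Nat.count_le _
    have h4 : enum d m ≤ enum d (speedE d n + 1) := (enum_strictMono hd).monotone (by omega)
    rw [speedE_succ] at h2
    exact Set.mem_setOf_eq ▸ le_trans h4 h2
  · have h5 : Nat.count (· ∈ y) (enum y B + 1) = B + 1 := Nat.count_nth_succ_of_infinite (p := (· ∈ y)) hy B
    have h6 : enum y B + 1 ≤ speedE d n := by
      have := he.le_apply (x := n)
      omega
    have h7 := Nat.count_monotone (· ∈ y) h6
    omega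

lemma le_to_omits {d y : Set ℕ} (hd : d.Infinite) (hy : y.Infinite)
    (h : {n : ℕ | enum d (2 * n) ≤ enum y n}.Infinite) :
    omitsInfinitelyManyIntervals y d := by
  unfold omitsInfinitelyManyIntervals
  set O := {i : ℕ | y ∩ Set.Ico (enum d i) (enum d (i + 1)) = ∅} with hO
  by_contra hfin
  rw [Set.not_infinite] at hfin
  obtain ⟨n, hn, hnc⟩ := h.exists_gt hfin.toFinset.card
  simp only [Set.mem_setOf_eq] at hn
  set A := {i ∈ Finset.range (2 * n) | i ∈ O} with hA
  set Ac := {i ∈ Finset.range (2 * n) | i ∉ O} with hAc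
  have hcard : A.card + Ac.card = 2 * n := by
    rw [hA, hAc, Finset.card_filter_add_card_filter_not, Finset.card_range]
  have hAc_le : Ac.card ≤ Nat.count (· ∈ y) (enum d (2 * n)) := by
    rw [Nat.count_eq_card_filter_range]
    apply Finset.card_le_card_of_injOn (fun i => sInf (y ∩ Set.Ico (enum d i) (enum d (i + 1))))
    · intro i hi
      simp only [Finset.mem_coe, hAc, Finset.mem_filter, Finset.mem_range, hO, Set.mem_setOf_eq] at hi
      have hne : (y ∩ Set.Ico (enum d i) (enum d (i + 1))).Nonempty :=
        Set.nonempty_iff_ne_empty.mpr hi.2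
      have hmem := Nat.sInf_mem hne
      simp only [Finset.mem_coe, Finset.mem_filter, Finset.mem_range]
      exact ⟨lt_of_lt_of_le hmem.2.2 ((enum_strictMono hd).monotone (by omega)), hmem.1⟩
    · intro i hi j hj hij
      simp only [Finset.mem_coe, hAc, Finset.mem_filter, Finset.mem_range, hO,
        Set.mem_setOf_eq] at hi hj
      have hnei : (y ∩ Set.Ico (enum d i) (enum d (i + 1))).Nonempty :=
        Set.nonempty_iff_ne_empty.mpr hi.2
      have hnej : (y ∩ Set.Ico (enum d j) (enum d (j + 1))).Nonempty :=
        Set.nonempty_iff_ne_empty.mpr hj.2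
      have hmi := Nat.sInf_mem hnei
      have hmj := Nat.sInf_mem hnej
      have hij2 : sInf (y ∩ Set.Ico (enum d i) (enum d (i + 1)))
          = sInf (y ∩ Set.Ico (enum d j) (enum d (j + 1))) := hij
      by_contra hne
      rcases Nat.lt_or_ge i j with hlt | hge
      · have : sInf (y ∩ Set.Ico (enum d i) (enum d (i + 1)))
            < sInf (y ∩ Set.Ico (enum d j) (enum d (j + 1))) :=
          lt_of_lt_of_le hmi.2.2 (le_trans ((enum_strictMono hd).monotone hlt) hmj.2.1)
        omega
      · have hlt : j < i := by omega
        have : sInf (y ∩ Set.Ico (enum d j) (enum d (j + 1)))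
            < sInf (y ∩ Set.Ico (enum d i) (enum d (i + 1))) :=
          lt_of_lt_of_le hmj.2.2 (le_trans ((enum_strictMono hd).monotone hlt) hmi.2.1)
        omega
  have hcnt : Nat.count (· ∈ y) (enum d (2 * n)) ≤ n := count_le_of_le_enum hy hn
  have hA_sub : A ⊆ hfin.toFinset := by
    intro i hi
    simp only [hA, Finset.mem_filter] at hi
    exact hfin.mem_toFinset.mpr hi.2
  have := Finset.card_le_card hA_sub
  omega

lemma min_to_le {d : Set ℕ} (hd : d.Infinite) {F : Finset (Set ℕ)} (hF : F.Nonempty)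
    (hinf : ∀ x ∈ F, x.Infinite)
    (h : {n : ℕ | enum d (n * n) ≤ F.inf' hF (fun x => enum x n)}.Infinite) :
    {m : ℕ | enum d m ≤ enum (⋃₀ ↑F) m}.Infinite := by
  obtain ⟨x0, hx0⟩ := hF
  have hy : (⋃₀ (↑F : Set (Set ℕ))).Infinite :=
    (hinf x0 hx0).mono (Set.subset_sUnion_of_mem hx0)
  apply Set.infinite_of_forall_exists_gt
  intro B
  obtain ⟨n, hn, hnB⟩ := h.exists_gt (max B F.card)
  simp only [Set.mem_setOf_eq] at hn
  have hcard1 : 1 ≤ F.card := Finset.card_pos.mpr ⟨x0, hx0⟩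
  refine ⟨F.card * n, ?_, ?_⟩
  · have hcount : Nat.count (· ∈ ⋃₀ (↑F : Set (Set ℕ))) (F.inf' ⟨x0, hx0⟩ (fun x => enum x n))
        ≤ F.card * n := by
      calc Nat.count (· ∈ ⋃₀ (↑F : Set (Set ℕ))) (F.inf' ⟨x0, hx0⟩ (fun x => enum x n))
          ≤ ∑ x ∈ F, Nat.count (· ∈ x) (F.inf' ⟨x0, hx0⟩ (fun x => enum x n)) :=
            count_sUnion_le F _
        _ ≤ ∑ _x ∈ F, n := Finset.sum_le_sum (fun x hx =>
              count_le_of_le_enum (hinf x hx) (Finset.inf'_le _ hx))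
        _ = F.card * n := by rw [Finset.sum_const, smul_eq_mul]
    have h1 : F.inf' ⟨x0, hx0⟩ (fun x => enum x n) ≤ enum (⋃₀ ↑F) (F.card * n) :=
      le_enum_of_count_le hy hcount
    have h2 : enum d (F.card * n) ≤ enum d (n * n) := (enum_strictMono hd).monotone
      (Nat.mul_le_mul_right _ (by omega))
    exact Set.mem_setOf_eq ▸ le_trans h2 (le_trans hn h1)
  · have h3 : n ≤ F.card * n := Nat.le_mul_of_pos_left n (by omega)
    omega

/-- Equivalent characterizations of `κ`-fin-unbounded sets: for `X ⊆ [ω]^ω` with `|X| ≥ κ`,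
(1) for each `d` there is a small `S` such that unions of finite subsets of `X \ S` omit
infinitely many intervals of `d`; (2) such unions satisfy `d ≤^∞ ⋃F`; (3) `d ≤^∞ min F`. -/
theorem stmt2 (κ : Cardinal) (hκ : Cardinal.aleph0 ≤ κ) (X : Set (Set ℕ))
    (hXinf : ∀ x ∈ X, x.Infinite) (hXcard : κ ≤ Cardinal.mk X) :
    ((∀ d : Set ℕ, d.Infinite → ∃ S ⊆ X, Cardinal.mk S < κ ∧
        ∀ F : Finset (Set ℕ), ↑F ⊆ X \ S → omitsInfinitelyManyIntervals (⋃₀ ↑F) d)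
      ↔ (∀ d : Set ℕ, d.Infinite → ∃ S ⊆ X, Cardinal.mk S < κ ∧
        ∀ F : Finset (Set ℕ), ↑F ⊆ X \ S → F.Nonempty →
          {n : ℕ | enum d n ≤ enum (⋃₀ ↑F) n}.Infinite))
    ∧
    ((∀ d : Set ℕ, d.Infinite → ∃ S ⊆ X, Cardinal.mk S < κ ∧
        ∀ F : Finset (Set ℕ), ↑F ⊆ X \ S → F.Nonempty →
          {n : ℕ | enum d n ≤ enum (⋃₀ ↑F) n}.Infinite)
      ↔ (∀ d : Set ℕ, d.Infinite → ∃ S ⊆ X, Cardinal.mk S < κ ∧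
        ∀ F : Finset (Set ℕ), ↑F ⊆ X \ S → ∀ hF : F.Nonempty,
          {n : ℕ | enum d n ≤ F.inf' hF (fun x => enum x n)}.Infinite)) := by
  have hyF : ∀ F : Finset (Set ℕ), ↑F ⊆ X → F.Nonempty → (⋃₀ (↑F : Set (Set ℕ))).Infinite := by
    intro F hF ⟨x0, hx0⟩
    exact (hXinf x0 (hF hx0)).mono (Set.subset_sUnion_of_mem hx0)
  constructor
  · constructor
    · -- (1) → (2)
      intro h1 d hd
      have hd' : (Set.range (speedE d)).Infinite :=
        Set.infinite_range_of_injective (speedE_strictMono hd).injective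
      obtain ⟨S, hSX, hScard, hS⟩ := h1 _ hd'
      refine ⟨S, hSX, hScard, fun F hF hFne => ?_⟩
      exact omits_to_le hd (hyF F (fun x hx => (hF hx).1) hFne) (hS F hF)
    · -- (2) → (1)
      intro h2 d hd
      have hg : StrictMono (fun n => enum d (2 * n)) := by
        intro a b hab
        exact enum_strictMono hd (by omega)
      have hd' : (Set.range (fun n => enum d (2 * n))).Infinite :=
        Set.infinite_range_of_injective hg.injective
      obtain ⟨S, hSX, hScard, hS⟩ := h2 _ hd'
      refine ⟨S, hSX, hScard, fun F hF => ?_⟩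
      rcases F.eq_empty_or_nonempty with rfl | hFne
      · unfold omitsInfinitelyManyIntervals
        have he : {n : ℕ | ⋃₀ (↑(∅ : Finset (Set ℕ)) : Set (Set ℕ))
            ∩ Set.Ico (enum d n) (enum d (n + 1)) = ∅} = Set.univ := by
          ext n; simp
        rw [he]
        exact Set.infinite_univ
      · have h := hS F hF hFne
        simp only [enum_range _ hg] at h
        exact le_to_omits hd (hyF F (fun x hx => (hF hx).1) hFne) h
  · constructor
    · -- (2) → (3)
      intro h2 d hd
      obtain ⟨S, hSX, hScard, hS⟩ := h2 d hd
      refine ⟨S, hSX, hScard, fun F hF hFne => ?_⟩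
      refine (hS F hF hFne).mono ?_
      intro n hn
      simp only [Set.mem_setOf_eq] at hn ⊢
      refine Finset.le_inf' hFne _ (fun x hx => le_trans hn ?_)
      exact enum_mono_subset (hXinf x (hF hx).1) (Set.subset_sUnion_of_mem hx) n
    · -- (3) → (2)
      intro h3 d hd
      have hg : StrictMono (fun n => enum d (n * n)) := by
        intro a b hab
        exact enum_strictMono hd (Nat.mul_self_lt_mul_self hab)
      have hd' : (Set.range (fun n => enum d (n * n))).Infinite :=
        Set.infinite_range_of_injective hg.injective
      obtain ⟨S, hSX, hScard, hS⟩ := h3 _ hd'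
      refine ⟨S, hSX, hScard, fun F hF hFne => ?_⟩
      have h := hS F hF hFne
      simp only [enum_range _ hg] at h
      exact min_to_le hd hFne (fun x hx => hXinf x (hF hx).1) h
end

section
/- (Talagrand's characterization, direction used in the paper) If F is a semifilter on ω that is meager (as a subset of P(ω) ≅ 2^ω), then there is a strictly increasing function h ∈ [ω]^ω such that for every x ∈ F and all but finitely many n, x ∩ [h(n), h(n+1)) ≠ ∅. -/
open Set Filter

lemma aux_union_interior {X : Type*} [TopologicalSpace X] {s t : Set X}
    (hs : IsClosed s) (hsi : interior s = ∅) (hti : interior t = ∅) :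
    interior (s ∪ t) = ∅ := by
  have h1 : interior (s ∪ t) \ s ⊆ interior t := by
    apply interior_maximal
    · intro x hx
      rcases interior_subset hx.1 with h | h
      · exact absurd h hx.2
      · exact h
    · exact isOpen_interior.sdiff hs
  rw [hti] at h1
  have h2 : interior (s ∪ t) ⊆ s := fun x hx => by
    by_contra hxs; exact h1 ⟨hx, hxs⟩
  have := interior_maximal h2 isOpen_interior
  rw [hsi] at this
  exact subset_eq_empty this rfl

lemma aux_ext (M : Set (ℕ → Bool)) (hMc : IsClosed M) (hMi : interior M = ∅)
    (s : ℕ → Bool) (n : ℕ) :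
    ∃ m : ℕ, ∃ t : ℕ → Bool, n < m ∧ (∀ i < n, t i = s i) ∧
      ∀ f : ℕ → Bool, (∀ i < m, f i = t i) → f ∉ M := by
  classical
  set C : Set (ℕ → Bool) := {f | ∀ i < n, f i = s i} with hC
  have hCopen : IsOpen C := by
    have : C = ⋂ i ∈ Finset.range n, (fun f : ℕ → Bool => f i) ⁻¹' {s i} := by
      ext f; simp [hC]
    rw [this]
    exact isOpen_biInter_finset fun i _ =>
      (continuous_apply i).isOpen_preimage _ (isOpen_discrete _)
  have hex : ∃ g ∈ C, g ∉ M := by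
    by_contra h
    push_neg at h
    have : s ∈ interior M := interior_maximal h hCopen (by simp [hC])
    simp [hMi] at this
  obtain ⟨g, hgC, hgM⟩ := hex
  obtain ⟨I, u, hIu, hpi⟩ := isOpen_pi_iff.mp hMc.isOpen_compl g hgM
  refine ⟨max (n + 1) ((I.sup id) + 1), g, lt_of_lt_of_le (Nat.lt_succ_self n) (le_max_left _ _),
    fun i hi => hgC i hi, fun f hf => ?_⟩
  have : f ∈ (I : Set ℕ).pi u := by
    intro i hi
    have hiI : i ∈ I := hi
    have : i < max (n + 1) ((I.sup id) + 1) :=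
      lt_of_le_of_lt (Finset.le_sup (f := id) hiI)
        (lt_of_lt_of_le (Nat.lt_succ_self _) (le_max_right _ _))
    rw [hf i this]
    exact (hIu i hiI).2
  exact fun hfM => hpi this hfM

lemma aux_stage (M : Set (ℕ → Bool)) (hMc : IsClosed M) (hMi : interior M = ∅) (n : ℕ) :
    ∃ m : ℕ, n < m ∧ ∀ s : ℕ → Bool, ∃ t : ℕ → Bool, (∀ i < n, t i = s i) ∧
      ∀ f : ℕ → Bool, (∀ i < m, f i = t i) → f ∉ M := by
  classical
  have key : ∀ v : Fin n → Bool, ∃ m : ℕ, ∃ t : ℕ → Bool, n < m ∧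
      (∀ i < n, t i = (fun i : ℕ => if h : i < n then v ⟨i, h⟩ else false) i) ∧
      ∀ f : ℕ → Bool, (∀ i < m, f i = t i) → f ∉ M :=
    fun v => aux_ext M hMc hMi _ n
  choose mv tv hlt hagree havoid using key
  refine ⟨Finset.univ.sup mv + n + 1, by omega, fun s => ?_⟩
  set v : Fin n → Bool := fun i => s i with hv
  refine ⟨tv v, fun i hi => by simpa [hi] using hagree v i hi, fun f hf => ?_⟩
  apply havoid v
  intro i hi
  apply hf
  have : mv v ≤ Finset.univ.sup mv := Finset.le_sup (Finset.mem_univ v)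
  omega

/-- Identify a subset of `ω` with its characteristic function in the Cantor space `2^ω`. -/
noncomputable def toCantor (s : Set ℕ) : ℕ → Bool :=
  fun n => @decide (n ∈ s) (Classical.propDecidable _)

/-- A semifilter: a nonempty family `F ⊆ [ω]^ω` such that whenever `a ∈ F`,
`b ∈ [ω]^ω` and `a \ b` is finite, also `b ∈ F`. -/
def IsSemifilter (F : Set (Set ℕ)) : Prop :=
  F.Nonempty ∧ (∀ a ∈ F, a.Infinite) ∧
  ∀ a ∈ F, ∀ b : Set ℕ, b.Infinite → (a \ b).Finite → b ∈ F

/-- (Talagrand, meager ⇒ "finitely hitting" direction.) If a semifilter `F` on `ω` is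
meager as a subset of `P(ω) ≅ 2^ω`, then there is a strictly increasing `h ∈ [ω]^ω`
such that every `x ∈ F` meets `[h(n), h(n+1))` for all but finitely many `n`. -/
theorem stmt6 (F : Set (Set ℕ)) (hF : IsSemifilter F)
    (hmeager : IsMeagre {f : ℕ → Bool | ∃ s ∈ F, toCantor s = f}) :
    ∃ h : ℕ → ℕ, StrictMono h ∧
      ∀ x ∈ F, ∀ᶠ n in atTop, (x ∩ Set.Ico (h n) (h (n + 1))).Nonempty := by
  classical
  obtain ⟨S, hSnwd, hScnt, hSsub⟩ := isMeagre_iff_countable_union_isNowhereDense.mp hmeager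
  -- enumerate S (made nonempty via insert ∅)
  obtain ⟨t, ht⟩ := (hScnt.insert ∅).exists_eq_range (insert_nonempty _ _)
  have htnwd : ∀ n, IsNowhereDense (t n) := by
    intro n
    have : t n ∈ insert ∅ S := ht ▸ mem_range_self n
    rcases this with h | h
    · rw [h]; exact isNowhereDense_empty
    · exact hSnwd _ h
  -- increasing sequence of closed nowhere dense sets
  set M : ℕ → Set (ℕ → Bool) := fun k =>
    Nat.rec (closure (t 0)) (fun k ih => ih ∪ closure (t (k + 1))) k with hM
  have hMsucc : ∀ k, M (k + 1) = M k ∪ closure (t (k + 1)) := fun k => rfl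
  have hMclosed : ∀ k, IsClosed (M k) := by
    intro k
    induction k with
    | zero => exact isClosed_closure
    | succ k ih => rw [hMsucc]; exact ih.union isClosed_closure
  have hMint : ∀ k, interior (M k) = ∅ := by
    intro k
    induction k with
    | zero =>
      have := htnwd 0
      rwa [IsNowhereDense] at this
    | succ k ih =>
      rw [hMsucc]
      apply aux_union_interior (hMclosed k) ih
      have := htnwd (k + 1)
      rwa [IsNowhereDense] at this
  have hMmono : ∀ {i j}, i ≤ j → M i ⊆ M j := by
    intro i j hij
    induction j with
    | zero => simp_all
    | succ j ih =>
      rcases hij.lt_or_eq with hlt | heq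
      · exact (ih (Nat.lt_succ_iff.mp hlt)).trans
          (by rw [hMsucc]; exact subset_union_left)
      · subst heq; rfl
  have hTM : ∀ k, t k ⊆ M k := by
    intro k
    induction k with
    | zero => exact subset_closure
    | succ k ih => rw [hMsucc]; exact subset_closure.trans subset_union_right
  -- the stage function
  have key : ∀ k n, ∃ m : ℕ, n < m ∧ ∀ s : ℕ → Bool, ∃ u : ℕ → Bool, (∀ i < n, u i = s i) ∧
      ∀ f : ℕ → Bool, (∀ i < m, f i = u i) → f ∉ M k :=
    fun k n => aux_stage (M k) (hMclosed k) (hMint k) n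
  choose step hstep hstep2 using key
  choose T hT1 hT2 using hstep2
  -- define h
  set h : ℕ → ℕ := fun k => Nat.rec 0 (fun k ih => step k ih) k with hh
  have hsucc : ∀ k, h (k + 1) = step k (h k) := fun k => rfl
  have hmono : StrictMono h := strictMono_nat_of_lt_succ fun k => by
    rw [hsucc]; exact hstep k (h k)
  have h0 : h 0 = 0 := rfl
  have hge : ∀ k, k ≤ h k := fun k => by
    induction k with
    | zero => simp [h0]
    | succ k ih => rw [hsucc k]; have := hstep k (h k); omega
  refine ⟨h, hmono, fun x hx => ?_⟩
  by_contra hcon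
  rw [Filter.not_eventually] at hcon
  have hfreq : ∀ N, ∃ k, N ≤ k ∧ x ∩ Set.Ico (h k) (h (k + 1)) = ∅ := by
    intro N
    obtain ⟨k, hk1, hk2⟩ := (Filter.frequently_atTop.mp hcon) N
    exact ⟨k, hk1, not_nonempty_iff_eq_empty.mp hk2⟩
  -- build y
  set Y : ℕ → (ℕ → Bool) := fun k =>
    Nat.rec (fun _ => true)
      (fun k ih => if (x ∩ Set.Ico (h k) (h (k + 1))).Nonempty
        then (fun n => if n < h k then ih n else true)
        else T k (h k) ih) k with hY
  have hYsucc : ∀ k, Y (k + 1) = if (x ∩ Set.Ico (h k) (h (k + 1))).Nonempty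
      then (fun n => if n < h k then Y k n else true)
      else T k (h k) (Y k) := fun k => rfl
  have hcoh1 : ∀ k n, n < h k → Y (k + 1) n = Y k n := by
    intro k n hn
    rw [hYsucc]
    split
    · simp [hn]
    · exact hT1 k (h k) (Y k) n hn
  have hcoh : ∀ k j n, k ≤ j → n < h k → Y j n = Y k n := by
    intro k j n hkj hn
    induction j with
    | zero => have : k = 0 := Nat.le_zero.mp hkj; simp [this]
    | succ j ih =>
      rcases hkj.lt_or_eq with hlt | heq
      · have hkj' : k ≤ j := Nat.lt_succ_iff.mp hlt
        rw [← ih hkj']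
        exact hcoh1 j n (lt_of_lt_of_le hn (hmono.le_iff_le.mpr hkj'))
      · subst heq; rfl
  set g : ℕ → Bool := fun n => Y (n + 1) n with hg
  have hgY : ∀ k n, n < h (k + 1) → g n = Y (k + 1) n := by
    intro k n hn
    have hn' : n < h (n + 1) := lt_of_lt_of_le (Nat.lt_succ_self n) (hge (n + 1))
    rcases le_total (n + 1) (k + 1) with hle | hle
    · exact (hcoh (n + 1) (k + 1) n hle hn').symm
    · exact hcoh (k + 1) (n + 1) n hle hn
  -- interval locating
  have hloc : ∀ n, ∃ k, h k ≤ n ∧ n < h (k + 1) := by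
    intro n
    have hP : ∃ j, n < h j := ⟨n + 1, lt_of_lt_of_le (Nat.lt_succ_self n) (hge (n + 1))⟩
    set j0 := Nat.find hP with hj0
    have hj0pos : j0 ≠ 0 := by
      intro hc
      have := Nat.find_spec hP
      rw [← hj0, hc, h0] at this
      omega
    obtain ⟨k, hk⟩ := Nat.exists_eq_succ_of_ne_zero hj0pos
    refine ⟨k, ?_, ?_⟩
    · have := Nat.find_min hP (m := k) (by omega)
      omega
    · have := Nat.find_spec hP
      rwa [← hj0, hk] at this
  -- x ⊆ y
  have hxg : ∀ n ∈ x, g n = true := by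
    intro n hn
    obtain ⟨k, hk1, hk2⟩ := hloc n
    have hne : (x ∩ Set.Ico (h k) (h (k + 1))).Nonempty := ⟨n, hn, hk1, hk2⟩
    rw [hgY k n hk2, hYsucc]
    simp [hne, Nat.not_lt.mpr hk1]
  set y : Set ℕ := {n | g n = true} with hy
  have hxy : x ⊆ y := hxg
  have hyF : y ∈ F := hF.2.2 x hx y ((hF.2.1 x hx).mono hxy)
    (by rw [Set.diff_eq_empty.mpr hxy]; exact finite_empty)
  have hty : toCantor y = g := by
    funext n
    simp only [toCantor]
    by_cases hgn : g n = true
    · simp [hy, hgn]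
    · simp [hy, hgn]
  -- g avoids every M k with x ∩ I_k = ∅
  have havoid : ∀ k, x ∩ Set.Ico (h k) (h (k + 1)) = ∅ → g ∉ M k := by
    intro k hk
    have hYk : Y (k + 1) = T k (h k) (Y k) := by
      rw [hYsucc]
      simp [not_nonempty_iff_eq_empty.mpr, hk]
    apply hT2 k (h k) (Y k)
    intro i hi
    rw [← hYk]
    exact hgY k i (lt_of_lt_of_le hi (le_of_eq (hsucc k).symm))
  -- contradiction
  have hgG : g ∈ ⋃₀ S := hSsub ⟨y, hyF, hty⟩
  obtain ⟨A, hAS, hgA⟩ := hgG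
  have hAins : A ∈ insert ∅ S := Or.inr hAS
  rw [ht] at hAins
  obtain ⟨n, hn⟩ := hAins
  have hgMn : g ∈ M n := hTM n (hn ▸ hgA)
  obtain ⟨k, hk1, hk2⟩ := hfreq n
  exact havoid k hk2 (hMmono hk1 hgMn)
end

section
/- Let κ be an infinite cardinal, Y a set of reals satisfying S₁(Γ_Borel, Γ_Borel), X ⊆ [ω]^ω a κ-fin-unbounded set, k a natural number, H ⊆ X finite, and U a countable open γ-cover of (H ∪ Fin)_M^k × Y (where subscript M denotes the Michael topology on subsets of P(ω), in which points of [ω]^ω are isolated and points of Fin have their usual neighborhoods). Then there is S ⊆ X with |S| < κ such that U is an ω-cover of (H ∪ Fin ∪ (X \ S))_M^k × Y. -/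
open Set Filter Topology

/-- The Cantor space `P(ω) ≅ 2^ω`. -/
abbrev Cant : Type := ℕ → Bool

/-- The subset of `ω` coded by a point of the Cantor space. -/
def memSet (x : Cant) : Set ℕ := {n : ℕ | x n = true}

/-- `x` codes an infinite subset of `ω`. -/
def InfinC (x : Cant) : Prop := (memSet x).Infinite

/-- The points of `P(ω)` coding finite sets. -/
def FinC : Set Cant := {x : Cant | (memSet x).Finite}

/-- The Michael topology on `P(ω)`: points of `[ω]^ω` are isolated, points of `Fin`
keep their usual neighborhoods (generated by standard opens and singletons of
infinite sets). -/
def michael : TopologicalSpace Cant :=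
  TopologicalSpace.generateFrom
    ({U : Set Cant | IsOpen U} ∪ {s : Set Cant | ∃ x, InfinC x ∧ s = {x}})

/-- The product topology on `P(ω)^k × P(ω)`, with the Michael topology on each of the
first `k` coordinates and the standard topology on the last one. -/
def michaelProd (k : ℕ) : TopologicalSpace ((Fin k → Cant) × Cant) :=
  @instTopologicalSpaceProd _ _
    (@Pi.topologicalSpace (Fin k) (fun _ => Cant) (fun _ => michael)) inferInstance

/-- `X ⊆ [ω]^ω` is a `κ`-fin-unbounded set: `|X| ≥ κ` and for each `d ∈ [ω]^ω` there is
`S ⊆ X` with `|S| < κ` such that the union of any finite subset of `X \ S` omits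
infinitely many intervals of `d`. -/
def KFinUnb (κ : Cardinal) (X : Set Cant) : Prop :=
  κ ≤ Cardinal.mk X ∧ ∀ d : Set ℕ, d.Infinite → ∃ S ⊆ X, Cardinal.mk S < κ ∧
    ∀ F : Finset Cant, ↑F ⊆ X \ S →
      {n : ℕ | (⋃ x ∈ F, memSet x) ∩ Set.Ico (enum d n) (enum d (n + 1)) = ∅}.Infinite

/-- A countable Borel `γ`-cover of `Y`: an infinite family of Borel sets such that every
point of `Y` belongs to all but finitely many members. -/
def BorelGammaCover (Y : Set Cant) (U : ℕ → Set Cant) : Prop :=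
  (∀ n, MeasurableSet (U n)) ∧ (Set.range U).Infinite ∧
  ∀ y ∈ Y, ∀ᶠ n in atTop, y ∈ U n

/-- `Y` satisfies `S₁(Γ_Borel, Γ_Borel)`. -/
def S1GBorGBor (Y : Set Cant) : Prop :=
  ∀ U : ℕ → ℕ → Set Cant, (∀ n, BorelGammaCover Y (U n)) →
    ∃ f : ℕ → ℕ, BorelGammaCover Y (fun n => U n (f n))

/-- A countable open `γ`-cover (by sets open in the Michael product topology) of
`Z^k × Y ⊆ P(ω)^k × P(ω)`. -/
def MGammaCover (k : ℕ) (Z Y : Set Cant) (U : ℕ → Set ((Fin k → Cant) × Cant)) : Prop :=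
  (∀ n, IsOpen[michaelProd k] (U n)) ∧ (Set.range U).Infinite ∧
  ∀ p : (Fin k → Cant) × Cant, (∀ i, p.1 i ∈ Z) → p.2 ∈ Y → ∀ᶠ n in atTop, p ∈ U n

/-- An `ω`-cover (by sets open in the Michael product topology) of `Z^k × Y`: every
finite subset of `Z^k × Y` is contained in some member. -/
def MOmegaCover (k : ℕ) (Z Y : Set Cant) (U : ℕ → Set ((Fin k → Cant) × Cant)) : Prop :=
  (∀ n, IsOpen[michaelProd k] (U n)) ∧
  ∀ P : Finset ((Fin k → Cant) × Cant), (∀ p ∈ P, (∀ i, p.1 i ∈ Z) ∧ p.2 ∈ Y) →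
    ∃ n, ↑P ⊆ U n

/-!
Fix `m`. As `H ∪ P(m)` is finite, for each `y ∈ Y` almost every `U n` contains, for some radius
`r`, the Michael box of radius `r` around every `(t, y)` with coordinates in `H ∪ P(m)`. Two
applications of `S₁(Γ_Borel, Γ_Borel)` select a member `U (g m)` and a radius `f m` that work for
each `y ∈ Y` from some `m` on. Fin-unboundedness, applied to a sequence `d` with
`f (d j) ≤ d (j + 1)`, yields `S`. Given finitely many points, take `j` large such that their
coordinates in `X \ S` all miss `[d j, d (j + 1))`: truncating these coordinates below `d j` moves
them into `P(d j)` while staying in the Michael box of radius `d (j + 1)`, so all the points lie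
in `U (g (d j))`.
-/

open PiNat

lemma eventually_cylinder_subset {E : ℕ → Type*} [∀ n, TopologicalSpace (E n)]
    [∀ n, DiscreteTopology (E n)] {s : Set (∀ n, E n)} (hs : IsOpen s) {x : ∀ n, E n}
    (hx : x ∈ s) : ∀ᶠ n in atTop, cylinder x n ⊆ s := by
  obtain ⟨_, ⟨y, n, rfl⟩, hxy, hys⟩ :=
    (isTopologicalBasis_cylinders E).exists_subset_of_mem_open hx hs
  rw [← mem_cylinder_iff_eq.1 hxy] at hys
  exact eventually_atTop.2 ⟨n, fun m hm => (cylinder_anti x hm).trans hys⟩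

open Classical in
def michaelCylinder (x : Cant) (r : ℕ) : Set Cant :=
  if x ∈ FinC then cylinder x r else {x}

lemma self_mem_michaelCylinder (x : Cant) (r : ℕ) : x ∈ michaelCylinder x r := by
  unfold michaelCylinder
  split_ifs <;> simp

lemma michaelCylinder_anti (x : Cant) : Antitone (michaelCylinder x) := fun _ _ h => by
  unfold michaelCylinder
  split_ifs
  exacts [cylinder_anti x h, subset_rfl]

lemma eventually_michaelCylinder_subset {O : Set Cant} (hO : IsOpen[michael] O) {x : Cant}
    (hx : x ∈ O) : ∀ᶠ r in atTop, michaelCylinder x r ⊆ O := by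
  induction hO with
  | basic s hs =>
    rcases hs with hs | ⟨z, hz, rfl⟩
    · filter_upwards [eventually_cylinder_subset hs hx] with r hr
      unfold michaelCylinder
      split_ifs
      exacts [hr, singleton_subset_iff.2 hx]
    · rw [mem_singleton_iff] at hx
      subst hx
      refine Eventually.of_forall fun r => ?_
      rw [michaelCylinder, if_neg (show x ∉ FinC from hz)]
  | univ => exact Eventually.of_forall fun _ => subset_univ _
  | inter s t _ _ hs ht =>
    exact ((hs hx.1).and (ht hx.2)).mono fun _ h => subset_inter h.1 h.2
  | sUnion S _ ih =>
    obtain ⟨s, hsS, hxs⟩ := hx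
    exact (ih s hsS hxs).mono fun _ h => h.trans (subset_sUnion_of_mem hsS)

def michaelBox {k : ℕ} (t : Fin k → Cant) (y : Cant) (r : ℕ) : Set ((Fin k → Cant) × Cant) :=
  (univ.pi fun i => michaelCylinder (t i) r) ×ˢ cylinder y r

lemma michaelBox_anti {k : ℕ} (t : Fin k → Cant) (y : Cant) : Antitone (michaelBox t y) :=
  fun _ _ h => prod_mono (pi_mono fun i _ => michaelCylinder_anti (t i) h) (cylinder_anti y h)

lemma eventually_michaelBox_subset {k : ℕ} {W : Set ((Fin k → Cant) × Cant)}
    (hW : IsOpen[michaelProd k] W) {t : Fin k → Cant} {y : Cant} (h : (t, y) ∈ W) :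
    ∀ᶠ r in atTop, michaelBox t y r ⊆ W := by
  obtain ⟨u, v, hu, hv, htu, hyv, huv⟩ :=
    (@isOpen_prod_iff _ _ (@Pi.topologicalSpace _ _ fun _ => michael) _ W).1 hW t y h
  obtain ⟨I, us, hus, hIu⟩ :=
    (@isOpen_pi_iff _ (fun _ => Cant) (fun _ => michael) u).1 hu t htu
  have hI : ∀ᶠ r in atTop, ∀ i ∈ I, michaelCylinder (t i) r ⊆ us i :=
    I.eventually_all.2 fun i hi => eventually_michaelCylinder_subset (hus i hi).1 (hus i hi).2
  filter_upwards [hI, eventually_cylinder_subset hv hyv] with r hr hry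
  exact fun p hp => huv ⟨hIu fun i hi => hr i hi (hp.1 i trivial), hry hp.2⟩

def resolved {k : ℕ} (W : Set ((Fin k → Cant) × Cant)) (T : Set (Fin k → Cant)) (r : ℕ) :
    Set Cant :=
  {y | ∀ t ∈ T, michaelBox t y r ⊆ W}

section resolved

variable {k : ℕ} {W : Set ((Fin k → Cant) × Cant)} {T : Set (Fin k → Cant)}

lemma resolved_mono : Monotone (resolved W T) :=
  fun _ _ h y hy t ht => (michaelBox_anti t y h).trans (hy t ht)

lemma isOpen_resolved {r : ℕ} : IsOpen (resolved W T r) := by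
  refine isOpen_iff_mem_nhds.2 fun y hy => mem_of_superset
    ((isOpen_cylinder _ y r).mem_nhds (self_mem_cylinder y r)) fun y' hy' t ht => ?_
  rw [michaelBox, mem_cylinder_iff_eq.1 hy']
  exact hy t ht

lemma exists_mem_resolved (hW : IsOpen[michaelProd k] W) (hT : T.Finite) {y : Cant}
    (h : ∀ t ∈ T, (t, y) ∈ W) : ∃ r, y ∈ resolved W T r :=
  (hT.eventually_all.2 fun t ht => eventually_michaelBox_subset hW (h t ht)).exists

end resolved

lemma memSet_injective : Function.Injective memSet := fun _ _ h =>
  funext fun n => Bool.eq_iff_iff.2 (Set.ext_iff.1 h n)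

def tuplesBelow (k : ℕ) (H : Set Cant) (a : ℕ) : Set (Fin k → Cant) :=
  univ.pi fun _ => H ∪ {x | memSet x ⊆ Iio a}

lemma tuplesBelow_finite {k : ℕ} {H : Set Cant} (hH : H.Finite) (a : ℕ) :
    (tuplesBelow k H a).Finite :=
  Set.Finite.pi fun _ =>
    hH.union ((finite_Iio a).finite_subsets.preimage memSet_injective.injOn)

lemma MGammaCover.eventually_exists_mem_resolved {k : ℕ} {H Y : Set Cant}
    {U : ℕ → Set ((Fin k → Cant) × Cant)} (hU : MGammaCover k (H ∪ FinC) Y U) (hH : H.Finite)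
    (a : ℕ) {y : Cant} (hy : y ∈ Y) :
    ∀ᶠ n in atTop, ∃ r, y ∈ resolved (U n) (tuplesBelow k H a) r := by
  have hsub : tuplesBelow k H a ⊆ {t | ∀ i, t i ∈ H ∪ FinC} := fun t ht i =>
    (ht i trivial).imp_right fun hx => (finite_Iio a).subset hx
  have hT := tuplesBelow_finite (k := k) hH a
  exact (hT.eventually_all.2 fun t ht => hU.2.2 (t, y) (hsub ht) hy).mono
    fun n hn => exists_mem_resolved (hU.1 n) hT hn

def truncate (a : ℕ) (x : Cant) : Cant := fun j => decide (j < a) && x j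

lemma memSet_truncate_subset (a : ℕ) (x : Cant) : memSet (truncate a x) ⊆ Iio a := by
  intro j hj
  simp_all [memSet, truncate]

lemma mem_cylinder_truncate {a b : ℕ} {x : Cant} (h : memSet x ∩ Ico a b = ∅) :
    x ∈ cylinder (truncate a x) b := by
  refine mem_cylinder_iff.2 fun j hj => ?_
  by_cases hja : j < a
  · simp [truncate, hja]
  · have : j ∉ memSet x := fun hx => (h.subset ⟨hx, not_lt.1 hja, hj⟩ : j ∈ (∅ : Set ℕ))
    simp_all [truncate, memSet]

lemma mem_of_mem_resolved {k : ℕ} {W : Set ((Fin k → Cant) × Cant)} {H : Set Cant} {a b : ℕ}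
    {t : Fin k → Cant} {y : Cant} (hy : y ∈ resolved W (tuplesBelow k H a) b)
    (ht : ∀ i, t i ∈ H ∨ memSet (t i) ∩ Ico a b = ∅) : (t, y) ∈ W := by
  classical
  let s : Fin k → Cant := fun i => if t i ∈ H then t i else truncate a (t i)
  refine hy s (fun i _ => ?_) ⟨fun i _ => ?_, self_mem_cylinder y b⟩
  · by_cases h : t i ∈ H
    · simp [s, h]
    · simp only [s, if_neg h]
      exact Or.inr (memSet_truncate_subset a (t i))
  · by_cases h : t i ∈ H
    · simp only [s, if_pos h]
      exact self_mem_michaelCylinder _ _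
    · simp only [s, if_neg h]
      rw [michaelCylinder, if_pos (show truncate a (t i) ∈ FinC from
        (finite_Iio a).subset (memSet_truncate_subset a (t i)))]
      exact mem_cylinder_truncate ((ht i).resolve_left h)

lemma exists_subset_of_finite_range {α : Type*} {Y : Set α} {C : ℕ → Set α}
    (hC : (range C).Finite) (hcov : ∀ y ∈ Y, ∀ᶠ n in atTop, y ∈ C n) : ∃ n, Y ⊆ C n := by
  by_contra! h
  have : ∀ V : range C, ∃ y ∈ Y, y ∉ (V : Set α) := by
    rintro ⟨_, n, rfl⟩
    exact not_subset.1 (h n)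
  choose y hyY hyV using this
  have := hC.to_subtype
  obtain ⟨n, hn⟩ := (eventually_all.2 fun V => hcov (y V) (hyY V)).exists
  exact hyV ⟨C n, n, rfl⟩ (hn _)

lemma borelGammaCover_compl_singleton {e : ℕ → Cant} (he : Function.Injective e)
    (Y : Set Cant) : BorelGammaCover Y fun n => {e n}ᶜ := by
  refine ⟨fun n => (measurableSet_singleton _).compl,
    infinite_range_of_injective fun a b h => he (singleton_injective (compl_injective h)),
    fun y _ => ?_⟩
  rw [← Nat.cofinite_eq_atTop]
  exact he.tendsto_cofinite.eventually (eventually_cofinite_ne y) |>.mono fun _ h => h.symm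

lemma S1GBorGBor.exists_eventually_mem {Y : Set Cant} (hY : S1GBorGBor Y)
    (C : ℕ → ℕ → Set Cant) (hC : ∀ m n, MeasurableSet (C m n))
    (hcov : ∀ m, ∀ y ∈ Y, ∀ᶠ n in atTop, y ∈ C m n) :
    ∃ f : ℕ → ℕ, ∀ y ∈ Y, ∀ᶠ m in atTop, y ∈ C m (f m) := by
  classical
  -- A family with finitely many members is no `BorelGammaCover`; one of its members contains `Y`,
  -- and it is replaced by the dummy cover `{e n}ᶜ` in the selection.
  have hfin : ∀ m, ∃ n, (range (C m)).Finite → Y ⊆ C m n := fun m => by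
    by_cases h : (range (C m)).Finite
    · exact (exists_subset_of_finite_range h (hcov m)).imp fun _ hn _ => hn
    · exact ⟨0, fun h' => absurd h' h⟩
  choose n₀ hn₀ using hfin
  let e := Infinite.natEmbedding Cant
  obtain ⟨f, hf⟩ := hY (fun m => if (range (C m)).Finite then fun n => {e n}ᶜ else C m)
    fun m => by
      split_ifs with h
      · exact borelGammaCover_compl_singleton e.injective Y
      · exact ⟨hC m, h, hcov m⟩
  refine ⟨fun m => if (range (C m)).Finite then n₀ m else f m,
    fun y hy => (hf.2.2 y hy).mono fun m hm => ?_⟩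
  dsimp only at hm ⊢
  split_ifs at hm ⊢ with h
  exacts [hn₀ m h hy, hm]

lemma S1GBorGBor.exists_eventually_mem_of_monotone {Y : Set Cant} (hY : S1GBorGBor Y)
    (V : ℕ → ℕ → ℕ → Set Cant) (hV : ∀ m n r, MeasurableSet (V m n r))
    (hmono : ∀ m n, Monotone (V m n)) (hcov : ∀ m, ∀ y ∈ Y, ∀ᶠ n in atTop, ∃ r, y ∈ V m n r) :
    ∃ g f : ℕ → ℕ, ∀ y ∈ Y, ∀ᶠ m in atTop, y ∈ V m (g m) (f m) := by
  obtain ⟨g, hg⟩ := hY.exists_eventually_mem (fun m n => ⋃ r, V m n r)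
    (fun m n => .iUnion (hV m n)) fun m y hy => (hcov m y hy).mono fun _ => mem_iUnion.2
  obtain ⟨f, hf⟩ := hY.exists_eventually_mem (fun m r => V m (g m) r ∪ (⋃ r, V m (g m) r)ᶜ)
    (fun m r => (hV _ _ _).union (MeasurableSet.iUnion (hV m (g m))).compl) fun m y _ => by
      by_cases hy : y ∈ ⋃ r, V m (g m) r
      · obtain ⟨r, hr⟩ := mem_iUnion.1 hy
        exact (eventually_ge_atTop r).mono fun _ h => Or.inl (hmono m (g m) h hr)
      · exact .of_forall fun _ => Or.inr hy
  exact ⟨g, f, fun y hy => ((hf y hy).and (hg y hy)).mono fun _ h =>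
    h.1.resolve_right (not_not.2 h.2)⟩

lemma exists_strictMono_le_succ (f : ℕ → ℕ) :
    ∃ d : ℕ → ℕ, StrictMono d ∧ ∀ j, f (d j) ≤ d (j + 1) := by
  let d : ℕ → ℕ := fun j => Nat.rec 0 (fun _ p => max (p + 1) (f p)) j
  exact ⟨d, strictMono_nat_of_lt_succ fun j => (lt_add_one _).trans_le (le_max_left _ _),
    fun j => le_max_right _ _⟩

lemma enum_range_s12 {d : ℕ → ℕ} (hd : StrictMono d) : enum (range d) = d := by
  have hinf : (Set.ofPred (· ∈ range d)).Infinite := infinite_range_of_injective hd.injective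
  refine (StrictMono.range_inj (Nat.nth_strictMono hinf) hd).1 ?_
  exact Nat.range_nth_of_infinite hinf

lemma eventually_memSet_subset_Iio {x : Cant} (hx : x ∈ FinC) :
    ∀ᶠ m in atTop, memSet x ⊆ Iio m := by
  obtain ⟨b, hb⟩ := hx.bddAbove
  exact (eventually_gt_atTop b).mono fun _ hm _ hn => (hb hn).trans_lt hm

lemma exists_subset_of_eventually_resolved {k : ℕ} {Y H : Set Cant}
    {U : ℕ → Set ((Fin k → Cant) × Cant)} {g f d : ℕ → ℕ} (hd : StrictMono d)
    (hdf : ∀ j, f (d j) ≤ d (j + 1))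
    (hgf : ∀ y ∈ Y, ∀ᶠ m in atTop, y ∈ resolved (U (g m)) (tuplesBelow k H m) (f m))
    {F : Finset Cant}
    (homit : {j | (⋃ x ∈ F, memSet x) ∩ Ico (d j) (d (j + 1)) = ∅}.Infinite)
    {P : Finset ((Fin k → Cant) × Cant)}
    (hP : ∀ p ∈ P, (∀ i, p.1 i ∈ H ∪ FinC ∪ ↑F) ∧ p.2 ∈ Y) :
    ∃ n, ↑P ⊆ U n := by
  have hres : ∀ᶠ m in atTop, ∀ p ∈ P, p.2 ∈ resolved (U (g m)) (tuplesBelow k H m) (f m) :=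
    P.eventually_all.2 fun p hp => hgf _ (hP p hp).2
  have hfin : ∀ᶠ m in atTop, ∀ p ∈ P, ∀ i, p.1 i ∈ FinC → memSet (p.1 i) ⊆ Iio m :=
    P.eventually_all.2 fun p _ => eventually_all.2 fun i =>
      eventually_imp_distrib_left.2 eventually_memSet_subset_Iio
  obtain ⟨j, hj, hm⟩ := ((Nat.frequently_atTop_iff_infinite.2 homit).and_eventually
    (hd.tendsto_atTop.eventually (hres.and hfin))).exists
  refine ⟨g (d j), fun p hp =>
    mem_of_mem_resolved (resolved_mono (hdf j) (hm.1 p hp)) fun i => ?_⟩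
  rcases (hP p hp).1 i with (h | h) | h
  · exact Or.inl h
  · exact Or.inr (eq_empty_of_forall_notMem fun n hn => (hm.2 p hp i h hn.1).not_ge hn.2.1)
  · exact Or.inr (eq_empty_of_subset_empty fun n hn =>
      hj.subset ⟨mem_iUnion₂.2 ⟨_, h, hn.1⟩, hn.2⟩)

theorem stmt12_general (κ : Cardinal)
    (Y : Set Cant) (hY : S1GBorGBor Y)
    (X : Set Cant) (hX : KFinUnb κ X)
    (k : ℕ) (H : Finset Cant)
    (U : ℕ → Set ((Fin k → Cant) × Cant)) (hU : MGammaCover k (↑H ∪ FinC) Y U) :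
    ∃ S ⊆ X, Cardinal.mk S < κ ∧ MOmegaCover k (↑H ∪ FinC ∪ (X \ S)) Y U := by
  classical
  obtain ⟨g, f, hgf⟩ := hY.exists_eventually_mem_of_monotone
    (fun m n r => resolved (U n) (tuplesBelow k H m) r)
    (fun _ _ _ => isOpen_resolved.measurableSet) (fun _ _ => resolved_mono)
    fun m _ hy => hU.eventually_exists_mem_resolved H.finite_toSet m hy
  obtain ⟨d, hd, hdf⟩ := exists_strictMono_le_succ f
  obtain ⟨S, hSX, hSκ, homit⟩ := hX.2 (range d) (infinite_range_of_injective hd.injective)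
  refine ⟨S, hSX, hSκ, hU.1, fun P hP => ?_⟩
  let F := (P.biUnion fun p => Finset.univ.image p.1).filter (· ∈ X \ S)
  refine exists_subset_of_eventually_resolved hd hdf hgf (F := F) ?_
    fun p hp => ⟨fun i => ?_, (hP p hp).2⟩
  · simpa only [enum_range_s12 hd] using homit F fun x hx => (Finset.mem_filter.1 hx).2
  · rcases (hP p hp).1 i with h | h
    · exact Or.inl h
    · exact Or.inr (Finset.mem_filter.2
        ⟨Finset.mem_biUnion.2 ⟨p, hp, Finset.mem_image_of_mem _ (Finset.mem_univ i)⟩, h⟩)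

/-- Lemma: for an infinite cardinal `κ`, a `κ`-fin-unbounded `X ⊆ [ω]^ω`, a set `Y`
satisfying `S₁(Γ_Borel, Γ_Borel)`, a finite `H ⊆ X` and a countable open `γ`-cover `U`
of `(H ∪ Fin)_M^k × Y`, there is `S ⊆ X` with `|S| < κ` such that `U` is an `ω`-cover
of `(H ∪ Fin ∪ (X \ S))_M^k × Y`. -/
theorem stmt12 (κ : Cardinal) (hκ : Cardinal.aleph0 ≤ κ)
    (Y : Set Cant) (hY : S1GBorGBor Y)
    (X : Set Cant) (hXinf : ∀ x ∈ X, InfinC x) (hX : KFinUnb κ X)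
    (k : ℕ) (H : Finset Cant) (hH : ↑H ⊆ X)
    (U : ℕ → Set ((Fin k → Cant) × Cant)) (hU : MGammaCover k (↑H ∪ FinC) Y U) :
    ∃ S ⊆ X, Cardinal.mk S < κ ∧ MOmegaCover k (↑H ∪ FinC ∪ (X \ S)) Y U :=
  stmt12_general κ Y hY X hX k H U hU
end

section
/- Let X, Y be topological spaces, κ an infinite regular cardinal, k a natural number, and for all n, m ∈ ω let U_{n,m} be an open cover of (X ∪ Fin)_M^k × Y. Assume: for every A ⊆ X with |A| < κ and every n ∈ ω, there are selections U_{n,m}(A) ∈ U_{n,m} (m ∈ ω) such that for each finite H ⊆ A there is S_H ⊆ X with |S_H| < κ and { U_{n,m}(A) : m ∈ ω } is an ω-cover of (H ∪ Fin ∪ (X \ S_H))_M^k × Y. Then there exist selections U_{n,m} ∈ U_{n,m} (for all n, m) such that { U_{n,m} : n, m ∈ ω } is an ω-cover of (X ∪ Fin)_M^k × Y. -/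
open Set Filter Topology

/-- The product topology on `P(ω)^k × Y`, Michael topology on the `P(ω)` coordinates. -/
def michaelProdY (k : ℕ) (Y : Type) [TopologicalSpace Y] :
    TopologicalSpace ((Fin k → Cant) × Y) :=
  @instTopologicalSpaceProd _ _
    (@Pi.topologicalSpace (Fin k) (fun _ => Cant) (fun _ => michael)) inferInstance

lemma finsetSubtype_card_lt (A : Set Cant) (κ : Cardinal) (hκ : κ.IsRegular)
    (h2 : Cardinal.mk A < κ) : Cardinal.mk {H : Finset Cant // ↑H ⊆ A} < κ := by
  have hinj : Function.Injective
      (fun H : {H : Finset Cant // ↑H ⊆ A} =>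
        Finset.preimage H.1 (Subtype.val : A → Cant) Subtype.val_injective.injOn) := by
    rintro ⟨H₁, hH₁⟩ ⟨H₂, hH₂⟩ hEq
    simp only [Subtype.mk.injEq] at hEq ⊢
    ext x
    constructor
    · intro hx
      have hxA : x ∈ A := hH₁ hx
      have : (⟨x, hxA⟩ : A) ∈ Finset.preimage H₁ Subtype.val Subtype.val_injective.injOn :=
        Finset.mem_preimage.mpr hx
      rw [hEq] at this
      exact Finset.mem_preimage.mp this
    · intro hx
      have hxA : x ∈ A := hH₂ hx
      have : (⟨x, hxA⟩ : A) ∈ Finset.preimage H₂ Subtype.val Subtype.val_injective.injOn :=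
        Finset.mem_preimage.mpr hx
      rw [← hEq] at this
      exact Finset.mem_preimage.mp this
  have hle : Cardinal.mk {H : Finset Cant // ↑H ⊆ A} ≤ Cardinal.mk (Finset A) :=
    Cardinal.mk_le_of_injective hinj
  rcases lt_or_ge (Cardinal.mk A) Cardinal.aleph0 with h | h
  · have : Finite A := Cardinal.lt_aleph0_iff_finite.mp h
    have : Fintype A := Fintype.ofFinite A
    exact lt_of_le_of_lt hle
      (lt_of_lt_of_le (Cardinal.lt_aleph0_of_finite (Finset A)) hκ.aleph0_le)
  · have h1 : Cardinal.mk (Finset A) ≤ Cardinal.mk (Multiset A) :=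
      Cardinal.mk_le_of_injective Finset.val_injective
    have h2' : Cardinal.mk (Multiset A) ≤ Cardinal.mk (List A) := Cardinal.mk_quotient_le
    have h3 : Cardinal.mk (List A) ≤ max Cardinal.aleph0 (Cardinal.mk A) :=
      Cardinal.mk_list_le_max A
    have : max Cardinal.aleph0 (Cardinal.mk A) < κ :=
      max_lt (lt_of_le_of_lt h h2) h2
    exact lt_of_le_of_lt (hle.trans (h1.trans (h2'.trans h3))) this

/-- The closing-off lemma: let `X ⊆ [ω]^ω`, `Y` a space, `κ` an infinite regular
cardinal, `k ∈ ω`, and for all `n, m` let `𝒰 n m` be an open cover of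
`(X ∪ Fin)_M^k × Y`. Assume that for every `A ⊆ X` with `|A| < κ` and every `n` there
are selections `U_{n,m}(A) ∈ 𝒰 n m` such that for each finite `H ⊆ A` there is
`S_H ⊆ X` with `|S_H| < κ` and `{U_{n,m}(A) : m}` an `ω`-cover of
`(H ∪ Fin ∪ (X \ S_H))_M^k × Y`. Then there are selections `U_{n,m} ∈ 𝒰 n m` such that
`{U_{n,m} : n, m}` is an `ω`-cover of `(X ∪ Fin)_M^k × Y`. -/
theorem stmt13 (Y : Type) [TopologicalSpace Y]
    (X : Set Cant) (hXinf : ∀ x ∈ X, InfinC x)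
    (κ : Cardinal) (hκ : κ.IsRegular) (k : ℕ)
    (𝒰 : ℕ → ℕ → Set (Set ((Fin k → Cant) × Y)))
    (h𝒰 : ∀ n m : ℕ, (∀ V ∈ 𝒰 n m, IsOpen[michaelProdY k Y] V) ∧
      {p : (Fin k → Cant) × Y | ∀ i, p.1 i ∈ X ∪ FinC} ⊆ ⋃₀ 𝒰 n m)
    (hyp : ∀ A ⊆ X, Cardinal.mk A < κ → ∀ n : ℕ,
      ∃ sel : ℕ → Set ((Fin k → Cant) × Y), (∀ m, sel m ∈ 𝒰 n m) ∧
        ∀ H : Finset Cant, ↑H ⊆ A → ∃ S ⊆ X, Cardinal.mk S < κ ∧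
          ∀ P : Finset ((Fin k → Cant) × Y),
            (∀ p ∈ P, ∀ i, p.1 i ∈ ↑H ∪ FinC ∪ (X \ S)) → ∃ m, ↑P ⊆ sel m) :
    ∃ sel : ℕ → ℕ → Set ((Fin k → Cant) × Y), (∀ n m, sel n m ∈ 𝒰 n m) ∧
      ∀ P : Finset ((Fin k → Cant) × Y), (∀ p ∈ P, ∀ i, p.1 i ∈ X ∪ FinC) →
        ∃ n m, ↑P ⊆ sel n m := by
  classical
  choose sel0 hsel0 hcov using hyp
  choose S0 hS0sub hS0card hS0P using hcov
  -- step preserves the invariant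
  have hempty : Cardinal.mk (∅ : Set Cant) < κ := by
    simp only [Cardinal.mk_emptyCollection]
    exact lt_of_lt_of_le Cardinal.aleph0_pos hκ.aleph0_le
  have hstep : ∀ (A : Set Cant) (h1 : A ⊆ X) (h2 : Cardinal.mk A < κ) (n : ℕ),
      (A ∪ ⋃ H : {H : Finset Cant // ↑H ⊆ A}, S0 A h1 h2 n H.1 H.2) ⊆ X ∧
        Cardinal.mk ↥(A ∪ ⋃ H : {H : Finset Cant // ↑H ⊆ A}, S0 A h1 h2 n H.1 H.2) < κ := by
    intro A h1 h2 n
    have hι := finsetSubtype_card_lt A κ hκ h2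
    constructor
    · exact Set.union_subset h1 (Set.iUnion_subset fun H => hS0sub A h1 h2 n H.1 H.2)
    · refine lt_of_le_of_lt (Cardinal.mk_union_le _ _) ?_
      refine Cardinal.add_lt_of_lt hκ.aleph0_le h2 ?_
      rw [Cardinal.card_iUnion_lt_iff_forall_of_isRegular hκ hι]
      exact fun H => hS0card A h1 h2 n H.1 H.2
  let Aseq : ℕ → {A : Set Cant // A ⊆ X ∧ Cardinal.mk A < κ} := fun n =>
    Nat.rec ⟨∅, Set.empty_subset X, hempty⟩
      (fun n p => ⟨p.1 ∪ ⋃ H : {H : Finset Cant // ↑H ⊆ p.1}, S0 p.1 p.2.1 p.2.2 n H.1 H.2,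
        hstep p.1 p.2.1 p.2.2 n⟩) n
  have hmono : Monotone (fun n => (Aseq n).1) :=
    monotone_nat_of_le_succ (fun n => Set.subset_union_left)
  have hSin : ∀ (n : ℕ) (H : Finset Cant) (hH : ↑H ⊆ (Aseq n).1),
      S0 (Aseq n).1 (Aseq n).2.1 (Aseq n).2.2 n H hH ⊆ (Aseq (n + 1)).1 := by
    intro n H hH
    exact (Set.subset_iUnion
      (fun H' : {H' : Finset Cant // ↑H' ⊆ (Aseq n).1} =>
        S0 (Aseq n).1 (Aseq n).2.1 (Aseq n).2.2 n H'.1 H'.2) ⟨H, hH⟩).trans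
      Set.subset_union_right
  refine ⟨fun n m => sel0 (Aseq n).1 (Aseq n).2.1 (Aseq n).2.2 n m,
    fun n m => hsel0 (Aseq n).1 (Aseq n).2.1 (Aseq n).2.2 n m, ?_⟩
  intro P hP
  set Ainf : Set Cant := ⋃ n, (Aseq n).1 with hAinf
  set T : Finset Cant := P.biUnion (fun p => Finset.image p.1 Finset.univ) with hT
  set H : Finset Cant := T.filter (· ∈ Ainf) with hHdef
  have hmem : ∀ x ∈ H, ∃ n, x ∈ (Aseq n).1 := by
    intro x hx
    have : x ∈ Ainf := (Finset.mem_filter.mp hx).2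
    exact Set.mem_iUnion.mp this
  choose nf hnf using hmem
  set j : ℕ := H.attach.sup (fun x => nf x.1 x.2) with hj
  have hHsub : ↑H ⊆ (Aseq j).1 := by
    intro x hx
    exact hmono (Finset.le_sup (f := fun x : {x // x ∈ H} => nf x.1 x.2)
      (Finset.mem_attach H ⟨x, hx⟩)) (hnf x hx)
  have hcond : ∀ p ∈ P, ∀ i, p.1 i ∈ ↑H ∪ FinC ∪ (X \ S0 (Aseq j).1 (Aseq j).2.1 (Aseq j).2.2 j H hHsub) := by
    intro p hp i
    rcases hP p hp i with hX | hFin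
    · by_cases hA : p.1 i ∈ Ainf
      · refine Or.inl (Or.inl ?_)
        refine Finset.mem_filter.mpr ⟨?_, hA⟩
        exact Finset.mem_biUnion.mpr ⟨p, hp, Finset.mem_image.mpr ⟨i, Finset.mem_univ i, rfl⟩⟩
      · refine Or.inr ⟨hX, fun hS => hA ?_⟩
        exact Set.mem_iUnion.mpr ⟨j + 1, hSin j H hHsub hS⟩
    · exact Or.inl (Or.inr hFin)
  obtain ⟨m, hm⟩ := hS0P (Aseq j).1 (Aseq j).2.1 (Aseq j).2.2 j H hHsub P hcond
  exact ⟨j, m, hm⟩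
end

section
/- If Y ⊆ [ω]^ω has cardinality less than cov(M), then Y satisfies S₁(Ω_Borel^fat, Ω_Borel^fat): for every sequence ⟨U_n : n ∈ ω⟩ of countable ω-fat Borel covers of Y there are selections U_n ∈ U_n such that { U_n : n ∈ ω } is an ω-fat Borel cover of Y. -/
open Set Filter

/-- The covering number of the meager ideal, `cov(M)`: the least cardinality of a
family of meager sets covering the space. -/
noncomputable def covM : Cardinal :=
  sInf { c : Cardinal | ∃ 𝒜 : Set (Set Cant), Cardinal.mk 𝒜 = c ∧
    (∀ M ∈ 𝒜, IsMeagre M) ∧ ⋃₀ 𝒜 = Set.univ }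

/-- `U` is a countable `ω`-fat Borel cover of `Y`: each member is Borel, and for every
finite `F ⊆ Y` and every finite family of nonempty open sets there is a member
containing `F` whose intersection with each of the open sets is nonmeager. -/
def OmegaFatBorelCover (Y : Set Cant) (U : ℕ → Set Cant) : Prop :=
  (∀ n, MeasurableSet (U n)) ∧
  ∀ F : Finset Cant, ↑F ⊆ Y →
    ∀ O : Finset (Set Cant), (∀ o ∈ O, IsOpen o ∧ o.Nonempty) →
      ∃ n, ↑F ⊆ U n ∧ ∀ o ∈ O, ¬ IsMeagre (U n ∩ o)

namespace Stmt15Aux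

/-- The basic clopen cylinder determined by a finite binary string. -/
def cyl (t : List Bool) : Set Cant := {x | ∀ i, i < t.length → x i = t.getD i false}

lemma isOpen_cyl (t : List Bool) : IsOpen (cyl t) := by
  have h : cyl t = ⋂ i ∈ Finset.range t.length,
      (fun x : Cant => x i) ⁻¹' {t.getD i false} := by
    ext x; simp [cyl]
  rw [h]
  exact isOpen_biInter_finset fun i _ =>
    (isOpen_discrete _).preimage (continuous_apply i)

lemma nonempty_cyl (t : List Bool) : (cyl t).Nonempty :=
  ⟨fun i => t.getD i false, fun i _ => rfl⟩

lemma exists_cyl {o : Set Cant} (ho : IsOpen o) {x : Cant} (hx : x ∈ o) :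
    ∃ t : List Bool, x ∈ cyl t ∧ cyl t ⊆ o := by
  have h : o ∈ nhds x := ho.mem_nhds hx
  rw [nhds_pi, Filter.mem_pi] at h
  obtain ⟨I, hIfin, s, hs, hsub⟩ := h
  obtain ⟨N, hN⟩ := hIfin.bddAbove
  refine ⟨List.ofFn (fun i : Fin (N + 1) => x i), ?_, ?_⟩
  · intro i hi
    simp only [List.length_ofFn] at hi
    rw [List.getD_eq_getElem _ _ (by simpa using hi), List.getElem_ofFn]
  · intro y hy
    apply hsub
    intro i hiI
    have hi : i < N + 1 := Nat.lt_succ_of_le (hN hiI)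
    have := hy i (by simpa using hi)
    rw [List.getD_eq_getElem _ _ (by simpa using hi), List.getElem_ofFn] at this
    rw [this]
    exact mem_of_mem_nhds (hs i)

/-- The function `ℕ → ℕ` coded by a point of Cantor space. -/
noncomputable def code (x : Cant) (n : ℕ) : ℕ := sInf {k | x (Nat.pair n k) = true}

lemma code_eq {x : Cant} {n m : ℕ} (h1 : ∀ j < m, x (Nat.pair n j) = false)
    (h2 : x (Nat.pair n m) = true) : code x n = m := by
  have hm : m ∈ {k | x (Nat.pair n k) = true} := h2
  refine le_antisymm (Nat.sInf_le hm) ?_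
  by_contra h
  push_neg at h
  have hmem := Nat.sInf_mem (⟨m, hm⟩ : {k | x (Nat.pair n k) = true}.Nonempty)
  have hf := h1 _ h
  rw [Set.mem_setOf_eq] at hmem
  simp only [code] at hf
  rw [hmem] at hf
  exact absurd hf (by decide)

lemma meager_bad (g : ℕ → ℕ) : IsMeagre {x : Cant | ∀ n, code x n ≠ g n} := by
  set D : ℕ → Set Cant := fun n =>
    {x : Cant | (∀ j < g n, x (Nat.pair n j) = false) ∧ x (Nat.pair n (g n)) = true} with hD
  have hopen : IsOpen (⋃ n, D n) := by
    refine isOpen_iUnion fun n => ?_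
    have h : D n = (⋂ j ∈ Finset.range (g n),
        (fun x : Cant => x (Nat.pair n j)) ⁻¹' {false}) ∩
        ((fun x : Cant => x (Nat.pair n (g n))) ⁻¹' {true}) := by
      ext x; simp [hD]
    rw [h]
    exact (isOpen_biInter_finset fun j _ =>
      (isOpen_discrete _).preimage (continuous_apply _)).inter
      ((isOpen_discrete _).preimage (continuous_apply _))
  have hdense : Dense (⋃ n, D n) := by
    rw [dense_iff_inter_open]
    rintro o ho ⟨p, hp⟩
    obtain ⟨t, hxt, hto⟩ := exists_cyl ho hp
    set n := t.length with hn
    set z : Cant := fun i =>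
      if h : i < t.length then t.getD i false else decide (i = Nat.pair n (g n)) with hz
    have hzlen : ∀ j, ¬ (Nat.pair n j < t.length) := by
      intro j
      exact not_lt.2 (Nat.left_le_pair n j)
    refine ⟨z, hto ?_, mem_iUnion.2 ⟨n, ?_, ?_⟩⟩
    · intro i hi
      simp only [hz]
      rw [dif_pos hi]
    · intro j hj
      simp only [hz]
      rw [dif_neg (hzlen j)]
      simp only [decide_eq_false_iff_not]
      intro hpair
      rw [Nat.pair_eq_pair] at hpair
      exact absurd hpair.2 (Nat.ne_of_lt hj)
    · simp only [hz]
      rw [dif_neg (hzlen (g n))]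
      simp
  have hres : (⋃ n, D n) ∈ residual Cant := residual_of_dense_open hopen hdense
  have hmeag : IsMeagre (⋃ n, D n)ᶜ := by
    rw [IsMeagre, compl_compl]; exact hres
  refine hmeag.mono ?_
  intro x hx hxE
  obtain ⟨n, h1, h2⟩ := mem_iUnion.1 hxE
  exact hx n (code_eq h1 h2)

lemma covM_avoid {ι : Type} (B : ι → Set Cant) (hB : ∀ i, IsMeagre (B i))
    (h : Cardinal.mk ι < covM) : ∃ x : Cant, ∀ i, x ∉ B i := by
  by_contra hc
  push_neg at hc
  have hmem : Cardinal.mk ↥(Set.range B) ∈ { c : Cardinal | ∃ 𝒜 : Set (Set Cant),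
      Cardinal.mk 𝒜 = c ∧ (∀ M ∈ 𝒜, IsMeagre M) ∧ ⋃₀ 𝒜 = Set.univ } := by
    refine ⟨Set.range B, rfl, ?_, ?_⟩
    · rintro M ⟨i, rfl⟩; exact hB i
    · ext x
      simp only [Set.mem_sUnion, Set.mem_univ, iff_true]
      obtain ⟨i, hi⟩ := hc x
      exact ⟨B i, ⟨i, rfl⟩, hi⟩
  have h1 : covM ≤ Cardinal.mk ↥(Set.range B) := csInf_le (OrderBot.bddBelow _) hmem
  exact absurd (h1.trans Cardinal.mk_range_le) (not_le.2 h)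

lemma aleph0_lt_covM (h : 0 < covM) : Cardinal.aleph0 < covM := by
  have hne : { c : Cardinal | ∃ 𝒜 : Set (Set Cant), Cardinal.mk 𝒜 = c ∧
      (∀ M ∈ 𝒜, IsMeagre M) ∧ ⋃₀ 𝒜 = Set.univ }.Nonempty := by
    by_contra hne
    rw [Set.not_nonempty_iff_eq_empty] at hne
    rw [covM, hne] at h
    simp [sInf] at h
  have hmem := csInf_mem hne
  rw [covM]
  obtain ⟨𝒜, hmk, hmeag, hcov⟩ := hmem
  rw [← covM] at hmk ⊢
  by_contra hle
  push_neg at hle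
  have hcount : 𝒜.Countable := by
    rw [← Set.countable_coe_iff, ← Cardinal.mk_le_aleph0_iff, hmk]
    exact hle
  have hmu : IsMeagre (⋃₀ 𝒜) := by
    rw [IsMeagre, Set.compl_sUnion]
    exact (countable_sInter_mem (hcount.image _)).2 (by
      rintro s ⟨M, hM, rfl⟩; exact hmeag M hM)
  rw [hcov] at hmu
  rw [IsMeagre, compl_univ] at hmu
  have hd : Dense (∅ : Set Cant) := dense_of_mem_residual hmu
  exact absurd hd.nonempty (by simp)

end Stmt15Aux

open Stmt15Aux in
/-- If `Y ⊆ [ω]^ω` has cardinality `< cov(M)`, then `Y` satisfies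
`S₁(Ω_Borel^fat, Ω_Borel^fat)`. -/
theorem stmt15 (Y : Set Cant) (hYinf : ∀ y ∈ Y, InfinC y)
    (hY : Cardinal.mk Y < covM)
    (U : ℕ → ℕ → Set Cant) (hU : ∀ n, OmegaFatBorelCover Y (U n)) :
    ∃ f : ℕ → ℕ, OmegaFatBorelCover Y (fun n => U n (f n)) := by
  classical
  have h0 : (0 : Cardinal) < covM := lt_of_le_of_lt zero_le hY
  have haleph := aleph0_lt_covM h0
  set ι := Finset ↥Y × Finset (List Bool) with hι
  have hcard : Cardinal.mk ι < covM := by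
    have h1 : Cardinal.mk (Finset ↥Y) ≤ max Cardinal.aleph0 (Cardinal.mk ↥Y) := by
      cases finite_or_infinite ↥Y with
      | inl h => exact le_max_of_le_left Cardinal.mk_le_aleph0
      | inr h => exact le_max_of_le_right (Cardinal.mk_finset_of_infinite ↥Y).le
    have h2 : Cardinal.mk (Finset (List Bool)) ≤ Cardinal.aleph0 := Cardinal.mk_le_aleph0
    calc Cardinal.mk ι
        = Cardinal.mk (Finset ↥Y) * Cardinal.mk (Finset (List Bool)) := by
          rw [hι, Cardinal.mk_prod, Cardinal.lift_id, Cardinal.lift_id]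
      _ ≤ max Cardinal.aleph0 (Cardinal.mk ↥Y) * Cardinal.aleph0 := mul_le_mul' h1 h2
      _ ≤ max (max (max Cardinal.aleph0 (Cardinal.mk ↥Y)) Cardinal.aleph0)
            Cardinal.aleph0 := Cardinal.mul_le_max _ _
      _ < covM := max_lt (max_lt (max_lt haleph hY) haleph) haleph
  have hg : ∀ (i : ι) (n : ℕ), ∃ k, ↑(i.1.image Subtype.val) ⊆ U n k ∧
      ∀ o ∈ i.2.image cyl, ¬ IsMeagre (U n k ∩ o) := by
    intro i n
    refine (hU n).2 (i.1.image Subtype.val) ?_ (i.2.image cyl) ?_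
    · intro y hy
      simp only [Finset.coe_image, Set.mem_image] at hy
      obtain ⟨a, -, rfl⟩ := hy
      exact a.2
    · intro o ho
      simp only [Finset.mem_image] at ho
      obtain ⟨t, -, rfl⟩ := ho
      exact ⟨isOpen_cyl t, nonempty_cyl t⟩
  choose g hg1 hg2 using hg
  obtain ⟨x, hx⟩ := covM_avoid (fun i : ι => {x : Cant | ∀ n, code x n ≠ g i n})
    (fun i => meager_bad (g i)) hcard
  refine ⟨code x, fun n => (hU n).1 _, ?_⟩
  intro F hF O hO
  have hcylch : ∀ o : {o // o ∈ O}, ∃ t, cyl t ⊆ o.1 := by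
    rintro ⟨o, ho⟩
    obtain ⟨hoo, p, hp⟩ := hO o ho
    obtain ⟨t, -, hto⟩ := exists_cyl hoo hp
    exact ⟨t, hto⟩
  choose T hT using hcylch
  set A : Finset ↥Y := F.attach.image (fun y => (⟨y.1, hF y.2⟩ : ↥Y)) with hA
  set B : Finset (List Bool) := O.attach.image T with hB
  have hAF : (A.image Subtype.val : Finset Cant) = F := by
    ext z
    constructor
    · intro hz
      obtain ⟨a, ha, rfl⟩ := Finset.mem_image.1 hz
      rw [hA] at ha
      obtain ⟨w, -, hw⟩ := Finset.mem_image.1 ha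
      rw [← hw]
      exact w.2
    · intro hz
      refine Finset.mem_image.2 ⟨⟨z, hF hz⟩, ?_, rfl⟩
      rw [hA]
      exact Finset.mem_image.2 ⟨⟨z, hz⟩, Finset.mem_attach _ _, rfl⟩
  obtain ⟨n, hn⟩ : ∃ n, code x n = g (A, B) n := by
    by_contra h
    push_neg at h
    exact hx (A, B) h
  refine ⟨n, ?_, ?_⟩
  · intro y hy
    show y ∈ U n (code x n)
    rw [hn]
    have hy' : y ∈ ((Finset.image Subtype.val A : Finset Cant) : Set Cant) := by
      rw [hAF]; exact hy
    exact hg1 (A, B) n hy'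
  · intro o ho
    have hmem : cyl (T ⟨o, ho⟩) ∈ B.image cyl := by
      simp only [hB, Finset.image_image, Finset.mem_image]
      exact ⟨⟨o, ho⟩, Finset.mem_attach _ _, rfl⟩
    have h2 := hg2 (A, B) n _ hmem
    intro hme
    have hme' : IsMeagre (U n (g (A, B) n) ∩ o) := by rw [← hn]; exact hme
    exact h2 (hme'.mono (inter_subset_inter_right _ (hT ⟨o, ho⟩)))
end

section
/- Let X be a topological space. Then X^k satisfies S₁(Γ, O) for every natural number k if and only if X^k satisfies S₁(Γ, Ω) for every natural number k. -/
open Set Filter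

/-- An open `γ`-cover: an infinite sequence of open sets such that every point belongs
to all but finitely many members. -/
def GammaCover {Z : Type*} [TopologicalSpace Z] (U : ℕ → Set Z) : Prop :=
  (∀ n, IsOpen (U n)) ∧ (Set.range U).Infinite ∧ ∀ z : Z, ∀ᶠ n in atTop, z ∈ U n

/-- An open `ω`-cover: open sets, none equal to the whole space, such that every finite
subset of the space is contained in some member. -/
def OmegaCover {Z : Type*} [TopologicalSpace Z] (U : ℕ → Set Z) : Prop :=
  (∀ n, IsOpen (U n)) ∧ (∀ n, U n ≠ Set.univ) ∧ ∀ F : Finset Z, ∃ n, ↑F ⊆ U n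

/-- `Z` satisfies `S₁(Γ, O)`: from every sequence of open `γ`-covers one can select one
member of each so that the selection is an open cover. -/
def S1GammaO (Z : Type*) [TopologicalSpace Z] : Prop :=
  ∀ U : ℕ → ℕ → Set Z, (∀ n, GammaCover (U n)) →
    ∃ f : ℕ → ℕ, ∀ z : Z, ∃ n, z ∈ U n (f n)

/-- `Z` satisfies `S₁(Γ, Ω)`: from every sequence of open `γ`-covers one can select one
member of each so that the selection is an `ω`-cover. -/
def S1GammaOmega (Z : Type*) [TopologicalSpace Z] : Prop :=
  ∀ U : ℕ → ℕ → Set Z, (∀ n, GammaCover (U n)) →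
    ∃ f : ℕ → ℕ, OmegaCover (fun n => U n (f n))

/-- Transfer of `S₁(Γ, O)` along a homeomorphism. -/
lemma s1GammaO_of_homeomorph {Y Z : Type*} [TopologicalSpace Y] [TopologicalSpace Z]
    (e : Y ≃ₜ Z) (h : S1GammaO Y) : S1GammaO Z := by
  intro U hU
  have h2 : ∀ n, GammaCover (fun m => e ⁻¹' U n m) := by
    intro n
    obtain ⟨ho, hinf, hev⟩ := hU n
    refine ⟨fun m => (ho m).preimage e.continuous, ?_,
      fun y => (hev (e y)).mono fun m hm => hm⟩
    have hre : Set.range (fun m => e ⁻¹' U n m) = (fun A => e ⁻¹' A) '' Set.range (U n) := by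
      rw [← Set.range_comp]; rfl
    rw [hre]
    exact hinf.image ((Set.preimage_injective.mpr e.surjective).injOn)
  obtain ⟨f, hf⟩ := h _ h2
  refine ⟨f, fun z => (hf (e.symm z)).imp fun n hn => ?_⟩
  simpa using hn

/-- Currying as a homeomorphism of function spaces with the product topology. -/
def curryHomeo (α β X : Type*) [TopologicalSpace X] : (α × β → X) ≃ₜ (α → β → X) where
  toEquiv := Equiv.curry α β X
  continuous_toFun := continuous_pi fun a => continuous_pi fun b => continuous_apply (a, b)
  continuous_invFun := continuous_pi fun p =>
    (continuous_apply p.2).comp (continuous_apply p.1)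

/-- The homeomorphism between `Fin (j*k) → X` and `Fin j → Fin k → X`. -/
def powHomeo (X : Type*) [TopologicalSpace X] (j k : ℕ) :
    (Fin (j * k) → X) ≃ₜ (Fin j → Fin k → X) :=
  (Homeomorph.piCongrLeft (Y := fun _ : Fin j × Fin k => X) finProdFinEquiv.symm).trans
    (curryHomeo (Fin j) (Fin k) X)

/-- Powers of a γ-cover form a γ-cover of the power. -/
lemma gammaCover_pow {Z : Type*} [TopologicalSpace Z] {U : ℕ → Set Z} (h : GammaCover U)
    (j : ℕ) (hj : 0 < j) :
    GammaCover (fun m => {w : Fin j → Z | ∀ i, w i ∈ U m}) := by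
  obtain ⟨ho, hinf, hev⟩ := h
  refine ⟨fun m => ?_, ?_, fun w => ?_⟩
  · show IsOpen {w : Fin j → Z | ∀ i, w i ∈ U m}
    have heq : {w : Fin j → Z | ∀ i, w i ∈ U m} = ⋂ i, (fun w : Fin j → Z => w i) ⁻¹' U m := by
      ext w; simp
    rw [heq]
    exact isOpen_iInter_of_finite fun i => (ho m).preimage (continuous_apply i)
  · have hre : Set.range (fun m => {w : Fin j → Z | ∀ i, w i ∈ U m}) =
        (fun A : Set Z => {w : Fin j → Z | ∀ i, w i ∈ A}) '' Set.range U := by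
      rw [← Set.range_comp]; rfl
    rw [hre]
    refine hinf.image ?_
    intro A _ B _ hAB
    ext z
    have h2 := Set.ext_iff.1 hAB (fun _ : Fin j => z)
    simp only [Set.mem_setOf_eq] at h2
    exact ⟨fun hz => h2.mp (fun _ => hz) ⟨0, hj⟩, fun hz => h2.mpr (fun _ => hz) ⟨0, hj⟩⟩
  · exact eventually_all.mpr fun i => hev (w i)

/-- A γ-cover has a subsequence consisting of proper subsets which is still a γ-cover. -/
lemma gammaCover_nonuniv {Z : Type*} [TopologicalSpace Z] {U : ℕ → Set Z}
    (h : GammaCover U) :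
    ∃ σ : ℕ → ℕ, GammaCover (fun m => U (σ m)) ∧ ∀ m, U (σ m) ≠ Set.univ := by
  obtain ⟨ho, hinf, hev⟩ := h
  have hSinf : {m | U m ≠ Set.univ}.Infinite := by
    by_contra hfin
    rw [Set.not_infinite] at hfin
    have hsub : Set.range U ⊆ insert Set.univ (U '' {m | U m ≠ Set.univ}) := by
      rintro _ ⟨m, rfl⟩
      by_cases hm : U m = Set.univ
      · exact hm ▸ Set.mem_insert _ _
      · exact Set.mem_insert_of_mem _ ⟨m, hm, rfl⟩
    exact hinf (((hfin.image _).insert _).subset hsub)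
  refine ⟨Nat.nth (fun m => U m ≠ Set.univ), ⟨fun m => ho _, ?_, fun z => ?_⟩,
    fun m => Nat.nth_mem_of_infinite hSinf m⟩
  · have hre : Set.range (fun m => U (Nat.nth (fun m => U m ≠ Set.univ) m)) =
        U '' Set.range (Nat.nth (fun m => U m ≠ Set.univ)) := by
      rw [← Set.range_comp]; rfl
    rw [hre, Nat.range_nth_of_infinite hSinf]
    have hdiff : (Set.range U \ {Set.univ}).Infinite := hinf.diff (Set.finite_singleton _)
    refine hdiff.mono ?_
    rintro _ ⟨⟨m, rfl⟩, hne⟩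
    exact ⟨m, by simpa using hne, rfl⟩
  · obtain ⟨M, hM⟩ := eventually_atTop.1 (hev z)
    exact eventually_atTop.2 ⟨M, fun m hm =>
      hM _ (hm.trans (Nat.nth_strictMono hSinf).le_apply)⟩

/-- For a space `X`: all finite powers of `X` satisfy `S₁(Γ, O)` if and only if all
finite powers of `X` satisfy `S₁(Γ, Ω)`. -/
theorem stmt18 (X : Type*) [TopologicalSpace X] [Infinite X] :
    (∀ k : ℕ, S1GammaO (Fin k → X)) ↔ (∀ k : ℕ, S1GammaOmega (Fin k → X)) := by
  constructor
  · intro h k U hU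
    choose σ hσγ hσne using fun N => gammaCover_nonuniv (hU N)
    -- for each j, select from the (j+1)-st column using the (j+1)-st power
    have key : ∀ j : ℕ, ∃ g : ℕ → ℕ, ∀ w : Fin (j + 1) → (Fin k → X), ∃ n,
        ∀ i, w i ∈ U (Nat.pairEquiv (j + 1, n)) (σ (Nat.pairEquiv (j + 1, n)) (g n)) := by
      intro j
      have hS : S1GammaO (Fin (j + 1) → Fin k → X) :=
        s1GammaO_of_homeomorph (powHomeo X (j + 1) k) (h ((j + 1) * k))
      have hcov : ∀ n, GammaCover (fun m => {w : Fin (j + 1) → (Fin k → X) |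
          ∀ i, w i ∈ U (Nat.pairEquiv (j + 1, n)) (σ (Nat.pairEquiv (j + 1, n)) m)}) :=
        fun n => gammaCover_pow (hσγ _) (j + 1) (Nat.succ_pos j)
      obtain ⟨g, hg⟩ := hS _ hcov
      exact ⟨g, fun w => hg w⟩
    choose g hg using key
    refine ⟨fun N => σ N (g ((Nat.pairEquiv.symm N).1 - 1) (Nat.pairEquiv.symm N).2),
      fun n => (hU n).1 _, fun n => hσne _ _, ?_⟩
    intro F
    rcases F.eq_empty_or_nonempty with rfl | hFne
    · exact ⟨0, by simp⟩
    · obtain ⟨c, hc⟩ : ∃ c, F.card = c + 1 :=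
        ⟨F.card - 1, (Nat.succ_pred_eq_of_pos (Finset.card_pos.mpr hFne)).symm⟩
      obtain ⟨n, hn⟩ := hg c (fun i => (F.equivFin.symm (Fin.cast hc.symm i) : Fin k → X))
      refine ⟨Nat.pairEquiv (c + 1, n), ?_⟩
      intro z hz
      have hzw : (F.equivFin.symm (Fin.cast hc.symm (Fin.cast hc (F.equivFin ⟨z, hz⟩))) :
          Fin k → X) = z := by simp
      have := hn (Fin.cast hc (F.equivFin ⟨z, hz⟩))
      rw [hzw] at this
      have heN : Nat.pairEquiv.symm (Nat.pairEquiv (c + 1, n)) = (c + 1, n) :=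
        Nat.pairEquiv.symm_apply_apply _
      simpa [heN] using this
  · intro h k U hU
    obtain ⟨f, ho, _, hfin⟩ := h k U hU
    refine ⟨f, fun z => ?_⟩
    obtain ⟨n, hn⟩ := hfin {z}
    exact ⟨n, hn (by simp)⟩
end
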